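/- Suppose Y = c₁X₁ + c₃T with X₂ = aX₁ + ε₂ (ε₂ independent noise with variance σ² > 0). Consider two linear predictors f₁ = c₁X₁ + c₃T and f₂ = c₁'X₁ + c₂'X₂ + c₃T with c₂' ≠ 0 and c₁' + c₂'a = c₁ (so both are unbiased given X₁ on average). Then for any distribution shift of X₁ the expected squared prediction error of f₂ exceeds that of f₁ by c₂'²σ², so f₁ has strictly lower target risk. -/

import Mathlib

/-! The target `Y` carries no noise, so `f₁` reproduces it exactly and has risk `0`, while
`c₁' + c₂' a = c₁` makes the residual of `f₂` equal to `-c₂' ε₂`, whose second moment is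
`c₂'² σ²`. The distribution of `X₁` never enters. -/

open MeasureTheory ProbabilityTheory

lemma integral_const_mul_sq {Ω : Type*} [MeasurableSpace Ω] (μ : Measure Ω) (c : ℝ)
    (f : Ω → ℝ) : ∫ ω, (c * f ω) ^ 2 ∂μ = c ^ 2 * ∫ ω, f ω ^ 2 ∂μ := by
  simp_rw [mul_pow]
  exact integral_const_mul _ _

theorem stmt5_general {Ω : Type*} [MeasurableSpace Ω] (μ : Measure Ω)
    (X₁ T ε₂ : Ω → ℝ) (a c₁ c₃ c₁' c₂' σ2 : ℝ)
    (hσ : 0 < σ2)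
    (hvar : ∫ ω, (ε₂ ω) ^ 2 ∂μ = σ2)
    (X₂ Y f₁ f₂ : Ω → ℝ)
    (hX₂ : ∀ ω, X₂ ω = a * X₁ ω + ε₂ ω)
    (hY : ∀ ω, Y ω = c₁ * X₁ ω + c₃ * T ω)
    (hf₁ : ∀ ω, f₁ ω = c₁ * X₁ ω + c₃ * T ω)
    (hf₂ : ∀ ω, f₂ ω = c₁' * X₁ ω + c₂' * X₂ ω + c₃ * T ω)
    (hc : c₁' + c₂' * a = c₁) (hc₂ : c₂' ≠ 0) :
    (∫ ω, (Y ω - f₂ ω) ^ 2 ∂μ = ∫ ω, (Y ω - f₁ ω) ^ 2 ∂μ + c₂' ^ 2 * σ2) ∧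
    (∫ ω, (Y ω - f₁ ω) ^ 2 ∂μ < ∫ ω, (Y ω - f₂ ω) ^ 2 ∂μ) := by
  have residual₁ : ∀ ω, Y ω - f₁ ω = 0 := fun ω => by rw [hY, hf₁]; ring
  have residual₂ : ∀ ω, Y ω - f₂ ω = -c₂' * ε₂ ω := fun ω => by
    rw [hY, hf₂, hX₂, ← hc]; ring
  have risk₁ : ∫ ω, (Y ω - f₁ ω) ^ 2 ∂μ = 0 := by simp [residual₁]
  have risk₂ : ∫ ω, (Y ω - f₂ ω) ^ 2 ∂μ = c₂' ^ 2 * σ2 := by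
    simp_rw [residual₂, integral_const_mul_sq, neg_sq, hvar]
  rw [risk₁, risk₂]
  exact ⟨(zero_add _).symm, by positivity⟩

/-- With `Y = c₁X₁ + c₃T`, `X₂ = aX₁ + ε₂` (`ε₂` mean-zero noise with variance
`σ² > 0`, independent of `(X₁, T)`), the predictors `f₁ = c₁X₁ + c₃T` and
`f₂ = c₁'X₁ + c₂'X₂ + c₃T` with `c₂' ≠ 0`, `c₁' + c₂'a = c₁` satisfy, for any distribution
of `X₁` (i.e. any shifted target domain), `E[(Y−f₂)²] = E[(Y−f₁)²] + c₂'²σ²`; hence `f₁`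
has strictly lower target risk. -/
theorem stmt5 {Ω : Type*} [MeasurableSpace Ω] (μ : Measure Ω) [IsProbabilityMeasure μ]
    (X₁ T ε₂ : Ω → ℝ) (a c₁ c₃ c₁' c₂' σ2 : ℝ)
    (hσ : 0 < σ2)
    (hmean : ∫ ω, ε₂ ω ∂μ = 0)
    (hvar : ∫ ω, (ε₂ ω) ^ 2 ∂μ = σ2)
    (hL2 : MemLp ε₂ 2 μ)
    (hindep : IndepFun (fun ω => (X₁ ω, T ω)) ε₂ μ)
    (X₂ Y f₁ f₂ : Ω → ℝ)
    (hX₂ : ∀ ω, X₂ ω = a * X₁ ω + ε₂ ω)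
    (hY : ∀ ω, Y ω = c₁ * X₁ ω + c₃ * T ω)
    (hf₁ : ∀ ω, f₁ ω = c₁ * X₁ ω + c₃ * T ω)
    (hf₂ : ∀ ω, f₂ ω = c₁' * X₁ ω + c₂' * X₂ ω + c₃ * T ω)
    (hc : c₁' + c₂' * a = c₁) (hc₂ : c₂' ≠ 0) :
    (∫ ω, (Y ω - f₂ ω) ^ 2 ∂μ = ∫ ω, (Y ω - f₁ ω) ^ 2 ∂μ + c₂' ^ 2 * σ2) ∧
    (∫ ω, (Y ω - f₁ ω) ^ 2 ∂μ < ∫ ω, (Y ω - f₂ ω) ^ 2 ∂μ) :=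
  stmt5_general μ X₁ T ε₂ a c₁ c₃ c₁' c₂' σ2 hσ hvar X₂ Y f₁ f₂ hX₂ hY hf₁ hf₂ hc hc₂
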